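/- arXiv:2410.18056 — 2 statements merged into one kernel-verified Lean document; each statement's English description precedes it below -/
import Mathlib

section
/- The Laplace transform of w ↦ w^q ₖN_{s;υ}^{(p,q)}(t, yw) equals a^{-(q+1)} N_s^{(p)}( t(a^υ - y^υ)/a^υ ), where N_s^{(p)} is the finite orthogonal polynomial, for a > y > 0, t > 0. -/
open Real MeasureTheory Finset

/-- Pochhammer symbol (a)_n = a(a+1)⋯(a+n-1). -/
noncomputable def poch (a : ℝ) (n : ℕ) : ℝ := ∏ i ∈ Finset.range n, (a + i)

/-- Generalized binomial coefficient C(a,k) = a(a-1)⋯(a-k+1)/k!. -/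
noncomputable def gchoose (a : ℝ) (k : ℕ) : ℝ :=
  (∏ i ∈ Finset.range k, (a - i)) / k.factorial

/-- Konhauser polynomial of the first kind Z_s^{(χ)}(w;υ). -/
noncomputable def konZ (s : ℕ) (χ : ℝ) (υ : ℕ) (w : ℝ) : ℝ :=
  (Real.Gamma ((υ : ℝ) * (s : ℝ) + χ + 1) / s.factorial) *
    ∑ l ∈ Finset.range (s + 1),
      (-1 : ℝ) ^ l * (s.choose l : ℝ) * w ^ (υ * l) / Real.Gamma ((υ : ℝ) * (l : ℝ) + χ + 1)

/-- Konhauser polynomial of the second kind Y_s^{(χ)}(w;υ). -/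
noncomputable def konY (s : ℕ) (χ : ℝ) (υ : ℕ) (w : ℝ) : ℝ :=
  (1 / (s.factorial : ℝ)) *
    ∑ m ∈ Finset.range (s + 1), w ^ m / m.factorial *
      ∑ l ∈ Finset.range (m + 1),
        (-1 : ℝ) ^ l * (m.choose l : ℝ) * poch ((χ + (l : ℝ) + 1) / (υ : ℝ)) s

/-- Finite orthogonal polynomial N_s^{(p)}(w). -/
noncomputable def finN (s : ℕ) (p : ℝ) (w : ℝ) : ℝ :=
  (-1 : ℝ) ^ s *
    ∑ k ∈ Finset.range (s + 1),
      (k.factorial : ℝ) * gchoose (p - (s : ℝ) - 1) k * (s.choose (s - k) : ℝ) * (-w) ^ k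

/-- Generalized Laguerre polynomial L_n^{(α)}(x). -/
noncomputable def lagL (n : ℕ) (α : ℝ) (x : ℝ) : ℝ :=
  ∑ k ∈ Finset.range (n + 1),
    (-1 : ℝ) ^ k * gchoose ((n : ℝ) + α) (n - k) * x ^ k / k.factorial

/-- Finite bivariate N-Konhauser polynomial (first set) ₖN_{s;υ}^{(p,q)}(t,w). -/
noncomputable def NK (s : ℕ) (υ : ℕ) (p q : ℝ) (t w : ℝ) : ℝ :=
  Real.Gamma (p - (s : ℝ)) *
    ∑ k ∈ Finset.range (s + 1), ∑ m ∈ Finset.range (s - k + 1),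
      poch (-(s : ℝ)) (k + m) * t ^ (s - k) * w ^ (υ * m) /
        (Real.Gamma (p - 2 * (s : ℝ) + (k : ℝ)) * Real.Gamma (q + 1 + (υ : ℝ) * (m : ℝ)) *
          k.factorial * m.factorial)

/-- Finite bivariate N-Konhauser polynomial (second set) ₖ𝒩_{s;υ}^{(p,q)}(t,w). -/
noncomputable def NK2 (s : ℕ) (υ : ℕ) (p q : ℝ) (t w : ℝ) : ℝ :=
  finN s p t * ∑ k ∈ Finset.range (s + 1), konY k q υ w

/-- Generalized Laguerre-Konhauser polynomial of Bin-Saad ᵤL_s^{(p,q)}(t,w). -/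
noncomputable def LKgen (s : ℕ) (υ : ℕ) (p q : ℝ) (t w : ℝ) : ℝ :=
  (s.factorial : ℝ) *
    ∑ k ∈ Finset.range (s + 1), ∑ m ∈ Finset.range (s - k + 1),
      (-1 : ℝ) ^ (k + m) * t ^ ((k : ℝ) + p) * w ^ ((υ : ℝ) * (m : ℝ) + q) /
        ((k.factorial : ℝ) * m.factorial * (s - k - m).factorial *
          Real.Gamma ((k : ℝ) + p + 1) * Real.Gamma (q + (υ : ℝ) * (m : ℝ) + 1))

/-- Bivariate biorthogonal Laguerre-Konhauser polynomial ₖL_{s;υ}^{(p,q)}(t,w). -/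
noncomputable def KL (s : ℕ) (υ : ℕ) (p q : ℝ) (t w : ℝ) : ℝ :=
  (Real.Gamma (p + 1 + (s : ℝ)) / s.factorial) *
    ∑ k ∈ Finset.range (s + 1), ∑ m ∈ Finset.range (s - k + 1),
      poch (-(s : ℝ)) (k + m) * t ^ k * w ^ (υ * m) /
        (Real.Gamma (p + 1 + (k : ℝ)) * Real.Gamma (q + 1 + (υ : ℝ) * (m : ℝ)) *
          k.factorial * m.factorial)

lemma poch_succ (a : ℝ) (n : ℕ) : poch a (n+1) = poch a n * (a + n) := by
  unfold poch; rw [Finset.prod_range_succ]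

lemma poch_add' (a : ℝ) (n m : ℕ) : poch a (n + m) = poch a n * poch (a + n) m := by
  unfold poch
  rw [Finset.prod_range_add]
  congr 1
  refine Finset.prod_congr rfl fun i _ => ?_
  push_cast; ring

lemma prod_desc (n : ℕ) : ∀ m : ℕ, m ≤ n →
    ∏ i ∈ Finset.range m, ((n : ℝ) - i) = (n.choose m) * m.factorial := by
  intro m
  induction m with
  | zero => simp
  | succ m ih =>
    intro h
    have hm : m ≤ n := Nat.le_of_succ_le h
    rw [Finset.prod_range_succ, ih hm]
    have h1 : (n:ℝ) - m = ((n - m : ℕ) : ℝ) := by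
      rw [Nat.cast_sub hm]
    rw [h1, ← Nat.cast_mul, ← Nat.cast_mul, ← Nat.cast_mul, Nat.cast_inj,
      Nat.factorial_succ]
    calc n.choose m * m.factorial * (n - m) = n.choose m * (n - m) * m.factorial := by ring
      _ = n.choose (m+1) * (m+1) * m.factorial := by rw [Nat.choose_succ_right_eq]
      _ = n.choose (m+1) * ((m+1) * m.factorial) := by ring

lemma poch_neg_nat (n m : ℕ) (h : m ≤ n) :
    poch (-(n:ℝ)) m = (-1)^m * (n.choose m) * m.factorial := by
  unfold poch
  have h0 : ∏ i ∈ Finset.range m, (-(n:ℝ) + i) = ∏ i ∈ Finset.range m, (-1) * ((n:ℝ) - i) :=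
    Finset.prod_congr rfl (fun i _ => by ring)
  rw [h0, Finset.prod_mul_distrib, Finset.prod_const, prod_desc n m h,
    Finset.card_range]
  ring

lemma gamma_poch (z : ℝ) (hz : 0 < z) (n : ℕ) :
    Real.Gamma (z + n) = Real.Gamma z * poch z n := by
  induction n with
  | zero => simp [poch]
  | succ n ih =>
    have h : z + ((n:ℕ)+1 : ℕ) = (z + n) + 1 := by push_cast; ring
    rw [h, Real.Gamma_add_one (by positivity), ih, poch_succ]; ring

lemma binom_sum (x : ℝ) (n : ℕ) :
    ∑ m ∈ Finset.range (n+1), (n.choose m : ℝ) * (-x)^m = (1-x)^n := by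
  have h := add_pow (-x) 1 n
  simp only [one_pow, mul_one] at h
  rw [show (1:ℝ) - x = -x + 1 by ring, h]
  exact (Finset.sum_congr rfl fun m _ => by ring).symm

lemma alg (p : ℝ) (s : ℕ) (hs : (s : ℝ) < (p - 1) / 2) (t x : ℝ) :
    Real.Gamma (p - s) *
      ∑ k ∈ Finset.range (s + 1), ∑ m ∈ Finset.range (s - k + 1),
        poch (-(s : ℝ)) (k + m) * t ^ (s - k) * x ^ m /
          (Real.Gamma (p - 2 * s + k) * k.factorial * m.factorial)
      = finN s p (t * (1 - x)) := by
  have hp2s : (1 : ℝ) < p - 2 * s := by linarith [hs]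
  have hpos : ∀ k : ℕ, (0:ℝ) < p - 2 * s + k := fun k => by
    have : (0:ℝ) ≤ k := Nat.cast_nonneg k
    linarith
  -- Step 1: collapse the inner sum
  have step1 : ∀ k ∈ Finset.range (s + 1),
      ∑ m ∈ Finset.range (s - k + 1),
        poch (-(s : ℝ)) (k + m) * t ^ (s - k) * x ^ m /
          (Real.Gamma (p - 2 * s + k) * k.factorial * m.factorial)
      = poch (-(s : ℝ)) k * (t * (1 - x)) ^ (s - k) /
          (Real.Gamma (p - 2 * s + k) * k.factorial) := by
    intro k hk
    have hk' : k ≤ s := Nat.lt_succ_iff.mp (Finset.mem_range.mp hk)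
    have hcast : -(s : ℝ) + k = -((s - k : ℕ) : ℝ) := by
      rw [Nat.cast_sub hk']; ring
    have hterm : ∀ m ∈ Finset.range (s - k + 1),
        poch (-(s : ℝ)) (k + m) * t ^ (s - k) * x ^ m /
          (Real.Gamma (p - 2 * s + k) * k.factorial * m.factorial)
        = (poch (-(s : ℝ)) k * t ^ (s - k) /
            (Real.Gamma (p - 2 * s + k) * k.factorial)) *
          (((s - k).choose m : ℝ) * (-x) ^ m) := by
      intro m hm
      have hm' : m ≤ s - k := Nat.lt_succ_iff.mp (Finset.mem_range.mp hm)
      rw [poch_add', hcast, poch_neg_nat _ _ hm']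
      have hmf : (m.factorial : ℝ) ≠ 0 := Nat.cast_ne_zero.mpr m.factorial_ne_zero
      field_simp
      ring
    rw [Finset.sum_congr rfl hterm, ← Finset.mul_sum, binom_sum x (s - k)]
    rw [mul_pow]
    ring
  rw [Finset.sum_congr rfl step1, Finset.mul_sum]
  -- Step 2: expand finN and reflect
  rw [finN, ← Finset.sum_range_reflect
    (fun k => (k.factorial : ℝ) * gchoose (p - (s : ℝ) - 1) k * (s.choose (s - k) : ℝ)
      * (-(t * (1 - x))) ^ k) (s + 1)]
  rw [Finset.mul_sum]
  refine Finset.sum_congr rfl fun k hk => ?_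
  have hk' : k ≤ s := Nat.lt_succ_iff.mp (Finset.mem_range.mp hk)
  simp only [Nat.add_sub_cancel]
  -- now: Γ(p-s) * (poch (-s) k * (t(1-x))^(s-k) / (Γ(p-2s+k) * k!))
  --    = (-1)^s * ((s-k)! * gchoose (p-s-1) (s-k) * C(s, s-(s-k)) * (-(t(1-x)))^(s-k))
  have hssk : s - (s - k) = k := Nat.sub_sub_self hk'
  have hgamma : Real.Gamma (p - s) = Real.Gamma (p - 2 * s + k) * poch (p - 2 * s + k) (s - k) := by
    have h := gamma_poch (p - 2 * s + k) (hpos k) (s - k)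
    rw [Nat.cast_sub hk'] at h
    rw [show p - (s:ℝ) = p - 2 * s + k + ((s:ℝ) - k) by ring, h]
  have hprod : ∏ i ∈ Finset.range (s - k), (p - (s:ℝ) - 1 - i) = poch (p - 2 * s + k) (s - k) := by
    rw [← Finset.prod_range_reflect (fun i => p - (s:ℝ) - 1 - i) (s - k)]
    unfold poch
    refine Finset.prod_congr rfl fun i hi => ?_
    have hi' : i < s - k := Finset.mem_range.mp hi
    have : ((s - k - 1 - i : ℕ) : ℝ) = (s:ℝ) - k - 1 - i := by
      have h1 : i + 1 ≤ s - k := hi'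
      rw [Nat.cast_sub (by omega), Nat.cast_sub (by omega), Nat.cast_sub hk']
      push_cast; ring
    rw [this]; ring
  rw [hgamma, poch_neg_nat s k hk', hssk, gchoose, hprod]
  have hΓ : Real.Gamma (p - 2 * s + k) ≠ 0 := ne_of_gt (Real.Gamma_pos_of_pos (hpos k))
  have hkf : (k.factorial : ℝ) ≠ 0 := Nat.cast_ne_zero.mpr k.factorial_ne_zero
  have hskf : ((s - k).factorial : ℝ) ≠ 0 := Nat.cast_ne_zero.mpr (s - k).factorial_ne_zero
  have hsgn : (-1:ℝ)^s * (-(t * (1 - x)))^(s-k) = (-1:ℝ)^k * (t * (1 - x))^(s-k) := by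
    rw [neg_pow (t*(1-x)), ← mul_assoc, ← pow_add, show s + (s-k) = 2*(s-k)+k by omega,
      pow_add, pow_mul, neg_one_sq, one_pow, one_mul]
  field_simp
  linear_combination (-(poch (p - 2 * (s:ℝ) + (k:ℝ)) (s - k) *
    ((s.choose k):ℝ))) * hsgn

set_option maxHeartbeats 1000000 in
theorem NK_laplace_finN (υ : ℕ) (hυ : 0 < υ) (p q : ℝ) (hq : q > -1) (s : ℕ)
    (hs : (s : ℝ) < (p - 1) / 2) (a y t : ℝ) (hy : 0 < y) (hya : y < a) (ht : 0 < t) :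
    ∫ w in Set.Ioi (0 : ℝ), Real.exp (-(a * w)) * (w ^ q * NK s υ p q t (y * w)) =
      a ^ (-(q + 1)) * finN s p (t * ((a ^ υ - y ^ υ) / a ^ υ)) := by
  have ha : 0 < a := hy.trans hya
  set c : ℕ → ℕ → ℝ := fun k m =>
    Real.Gamma (p - (s : ℝ)) * poch (-(s : ℝ)) (k + m) * t ^ (s - k) * y ^ (υ * m) /
      (Real.Gamma (p - 2 * (s : ℝ) + (k : ℝ)) * Real.Gamma (q + 1 + (υ : ℝ) * (m : ℝ)) *
        k.factorial * m.factorial) with hc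
  -- pointwise identity
  have hpoint : ∀ w ∈ Set.Ioi (0:ℝ),
      Real.exp (-(a * w)) * (w ^ q * NK s υ p q t (y * w)) =
      ∑ k ∈ Finset.range (s + 1), ∑ m ∈ Finset.range (s - k + 1),
        c k m * (w ^ (q + (υ : ℝ) * m) * Real.exp (-(a * w))) := by
    intro w hw
    have hw0 : 0 < w := hw
    rw [NK]
    simp only [Finset.mul_sum]
    refine Finset.sum_congr rfl fun k _ => Finset.sum_congr rfl fun m _ => ?_
    have h2 : w ^ (q + (υ : ℝ) * m) = w ^ q * w ^ (υ * m : ℕ) := by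
      rw [show q + (υ:ℝ) * m = q + ((υ * m : ℕ) : ℝ) by push_cast; ring,
        rpow_add hw0, rpow_natCast]
    rw [h2, hc, mul_pow]
    ring
  rw [setIntegral_congr_fun measurableSet_Ioi hpoint]
  -- integrability
  have hint : ∀ r : ℝ, -1 < r →
      IntegrableOn (fun w : ℝ => w ^ r * Real.exp (-(a * w))) (Set.Ioi 0) := by
    intro r hr
    have := integrableOn_rpow_mul_exp_neg_mul_rpow hr one_pos ha
    simpa [rpow_one, neg_mul] using this
  have hr : ∀ m : ℕ, (-1:ℝ) < q + (υ:ℝ) * m := fun m => by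
    have : (0:ℝ) ≤ (υ:ℝ) * m := by positivity
    linarith
  have hintc : ∀ k m : ℕ,
      IntegrableOn (fun w : ℝ => c k m * (w ^ (q + (υ : ℝ) * m) * Real.exp (-(a * w))))
        (Set.Ioi 0) :=
    fun k m => ((hint _ (hr m)).const_mul _)
  rw [MeasureTheory.integral_finset_sum _
    (fun k _ => integrable_finset_sum _ (fun m _ => hintc k m))]
  rw [Finset.sum_congr rfl (fun k _ =>
    MeasureTheory.integral_finset_sum _ (fun m _ => hintc k m))]
  -- evaluate each integral
  have hI : ∀ m : ℕ, ∫ w in Set.Ioi (0:ℝ), w ^ (q + (υ:ℝ) * m) * Real.exp (-(a * w)) =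
      a ^ (-(q + (υ:ℝ) * m + 1)) * Real.Gamma (q + 1 + (υ:ℝ) * m) := by
    intro m
    have h := integral_rpow_mul_exp_neg_mul_rpow (p := 1) (q := q + (υ:ℝ) * m) (b := a)
      one_pos (hr m) ha
    simp only [rpow_one, neg_mul, div_one, one_div, inv_one, mul_one] at h
    rw [show (∫ w in Set.Ioi (0:ℝ), w ^ (q + (υ:ℝ) * m) * Real.exp (-(a * w))) =
        ∫ x in Set.Ioi (0:ℝ), x ^ (q + (υ:ℝ) * m) * Real.exp (-(a * x)) from rfl, h]
    rw [show q + (υ:ℝ) * m + 1 = q + 1 + (υ:ℝ) * m by ring]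
  simp only [MeasureTheory.integral_const_mul, hI]
  -- algebraic rearrangement
  have hsum : ∑ k ∈ Finset.range (s + 1), ∑ m ∈ Finset.range (s - k + 1),
      c k m * (a ^ (-(q + (υ:ℝ) * m + 1)) * Real.Gamma (q + 1 + (υ:ℝ) * m)) =
      a ^ (-(q + 1)) * (Real.Gamma (p - s) *
        ∑ k ∈ Finset.range (s + 1), ∑ m ∈ Finset.range (s - k + 1),
          poch (-(s : ℝ)) (k + m) * t ^ (s - k) * ((y / a) ^ υ) ^ m /
            (Real.Gamma (p - 2 * s + k) * k.factorial * m.factorial)) := by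
    simp only [Finset.mul_sum]
    refine Finset.sum_congr rfl fun k _ => Finset.sum_congr rfl fun m _ => ?_
    have hΓq : Real.Gamma (q + 1 + (υ:ℝ) * m) ≠ 0 :=
      ne_of_gt (Real.Gamma_pos_of_pos (by linarith [hr m]))
    have h1 : a ^ (-(((υ * m : ℕ)) : ℝ)) = ((a : ℝ) ^ (υ * m : ℕ))⁻¹ := by
      rw [rpow_neg ha.le, rpow_natCast]
    have hap : a ^ (-(q + (υ:ℝ) * m + 1)) =
        a ^ (-(q + 1)) * ((a : ℝ) ^ (υ * m : ℕ))⁻¹ := by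
      rw [show -(q + (υ:ℝ) * m + 1) = -(q+1) + (-((υ * m : ℕ) : ℝ)) by push_cast; ring,
        rpow_add ha, h1]
    have hane : ((a : ℝ) ^ υ) ^ m ≠ 0 := pow_ne_zero _ (pow_ne_zero _ (ne_of_gt ha))
    simp only [hc]
    rw [hap, pow_mul y υ m, pow_mul a υ m, div_pow y a υ, div_pow (y^υ) (a^υ) m]
    have hΓ2 : Real.Gamma (p - 2 * (s:ℝ) + (k:ℝ)) ≠ 0 := by
      refine ne_of_gt (Real.Gamma_pos_of_pos ?_)
      have h0 : (0:ℝ) ≤ (k:ℝ) := Nat.cast_nonneg k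
      linarith
    have hkf : (k.factorial:ℝ) ≠ 0 := Nat.cast_ne_zero.mpr k.factorial_ne_zero
    have hmf : (m.factorial:ℝ) ≠ 0 := Nat.cast_ne_zero.mpr m.factorial_ne_zero
    field_simp
  rw [hsum, alg p s hs t ((y / a) ^ υ)]
  congr 2
  have : (y / a) ^ υ = y ^ υ / a ^ υ := div_pow y a υ
  rw [this]
  field_simp
end

section
/- For τ with Re(τ) > 0, w > b, q > -1, the Riemann-Liouville fractional integral of order τ based at b applied to w ↦ (w-b)^q ₖN_{s;υ}^{(p,q)}(t, y(w-b)) equals (w-b)^{q+τ} ₖN_{s;υ}^{(p,q+τ)}(t, y(w-b)). -/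
open Real MeasureTheory Finset

lemma beta01 {a c : ℝ} (ha : 0 < a) (hc : 0 < c) :
    ∫ x in (0:ℝ)..1, x ^ (c - 1) * (1 - x) ^ (a - 1)
      = Real.Gamma c * Real.Gamma a / Real.Gamma (c + a) := by
  have hB : Complex.betaIntegral (c : ℂ) (a : ℂ)
      = ((∫ x in (0:ℝ)..1, x ^ (c - 1) * (1 - x) ^ (a - 1) : ℝ) : ℂ) := by
    rw [Complex.betaIntegral, ← intervalIntegral.integral_ofReal]
    refine intervalIntegral.integral_congr fun x hx => ?_
    rw [Set.uIcc_of_le (by norm_num : (0:ℝ) ≤ 1)] at hx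
    rw [Complex.ofReal_mul, Complex.ofReal_cpow hx.1, Complex.ofReal_cpow (by linarith [hx.2] : (0:ℝ) ≤ 1 - x)]
    push_cast
    ring
  have h := Complex.Gamma_mul_Gamma_eq_betaIntegral
    (s := (c:ℂ)) (t := (a:ℂ)) (by simpa using hc) (by simpa using ha)
  rw [hB] at h
  have hne : Real.Gamma (c + a) ≠ 0 := (Real.Gamma_pos_of_pos (by linarith)).ne'
  have : ((Real.Gamma c * Real.Gamma a : ℝ) : ℂ)
      = ((Real.Gamma (c + a) * ∫ x in (0:ℝ)..1, x ^ (c - 1) * (1 - x) ^ (a - 1) : ℝ) : ℂ) := by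
    push_cast [← Complex.Gamma_ofReal]
    simpa using h
  have h2 := Complex.ofReal_inj.mp this
  field_simp
  linarith [h2]

lemma beta_integrable {a c b w : ℝ} (ha : 0 < a) (hc : 0 < c) (hbw : b < w) :
    IntervalIntegrable (fun ξ => (w - ξ) ^ (a - 1) * (ξ - b) ^ (c - 1)) volume b w := by
  set m := (b + w) / 2 with hm
  have hbm : b < m := by simp only [hm]; linarith
  have hmw : m < w := by simp only [hm]; linarith
  have h1 : IntervalIntegrable (fun ξ => (w - ξ) ^ (a - 1) * (ξ - b) ^ (c - 1)) volume b m := by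
    have hint : IntervalIntegrable (fun ξ : ℝ => (ξ - b) ^ (c - 1)) volume b m := by
      have := (intervalIntegral.intervalIntegrable_rpow' (a := 0) (b := m - b)
        (by linarith : (-1:ℝ) < c - 1)).comp_sub_right b
      simpa using this
    have hcont : ContinuousOn (fun ξ : ℝ => (w - ξ) ^ (a - 1)) (Set.uIcc b m) := by
      apply ContinuousOn.rpow_const
      · exact (continuous_const.sub continuous_id).continuousOn
      · intro x hx
        rw [Set.uIcc_of_le hbm.le] at hx
        exact Or.inl (by simp; linarith [hx.2])
    simpa [mul_comm] using hint.mul_continuousOn hcont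
  have h2 : IntervalIntegrable (fun ξ => (w - ξ) ^ (a - 1) * (ξ - b) ^ (c - 1)) volume m w := by
    have hint : IntervalIntegrable (fun ξ : ℝ => (w - ξ) ^ (a - 1)) volume m w := by
      have := (intervalIntegral.intervalIntegrable_rpow' (a := 0) (b := w - m)
        (by linarith : (-1:ℝ) < a - 1)).comp_sub_left w
      simpa using this.symm
    have hcont : ContinuousOn (fun ξ : ℝ => (ξ - b) ^ (c - 1)) (Set.uIcc m w) := by
      apply ContinuousOn.rpow_const
      · exact (continuous_id.sub continuous_const).continuousOn
      · intro x hx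
        rw [Set.uIcc_of_le hmw.le] at hx
        exact Or.inl (by simp; linarith [hx.1])
    exact hint.mul_continuousOn hcont
  exact h1.trans h2

lemma beta_scaled {a c b w : ℝ} (ha : 0 < a) (hc : 0 < c) (hbw : b < w) :
    ∫ ξ in b..w, (w - ξ) ^ (a - 1) * (ξ - b) ^ (c - 1)
      = (w - b) ^ (a + c - 1) * (Real.Gamma a * Real.Gamma c / Real.Gamma (a + c)) := by
  have hwb : 0 < w - b := by linarith
  have key := intervalIntegral.smul_integral_comp_mul_add
    (a := (0:ℝ)) (b := 1) (fun ξ => (w - ξ) ^ (a - 1) * (ξ - b) ^ (c - 1)) (w - b) b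
  simp only [mul_zero, zero_add, mul_one, sub_add_cancel, smul_eq_mul] at key
  rw [← key]
  have : ∀ x ∈ Set.uIcc (0:ℝ) 1,
      (w - ((w - b) * x + b)) ^ (a - 1) * ((w - b) * x + b - b) ^ (c - 1)
        = ((w - b) ^ (a - 1) * (w - b) ^ (c - 1)) * ((1 - x) ^ (a - 1) * x ^ (c - 1)) := by
    intro x hx
    rw [Set.uIcc_of_le (by norm_num : (0:ℝ) ≤ 1)] at hx
    have e1 : w - ((w - b) * x + b) = (w - b) * (1 - x) := by ring
    have e2 : (w - b) * x + b - b = (w - b) * x := by ring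
    rw [e1, e2, Real.mul_rpow hwb.le (by linarith [hx.2]), Real.mul_rpow hwb.le hx.1]
    ring
  rw [intervalIntegral.integral_congr this, intervalIntegral.integral_const_mul]
  have hb01 : ∫ x in (0:ℝ)..1, (1 - x) ^ (a - 1) * x ^ (c - 1)
      = Real.Gamma c * Real.Gamma a / Real.Gamma (c + a) := by
    rw [← beta01 ha hc]
    exact intervalIntegral.integral_congr fun x hx => by ring
  rw [hb01, show a + c - 1 = (a - 1) + ((c - 1) + 1) by ring, Real.rpow_add hwb,
    Real.rpow_add hwb, Real.rpow_one, add_comm c a]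
  ring

lemma alg_helper (gt gq gqt gp gd kf mf P T Y X Z : ℝ) (h1 : gt ≠ 0) (h2 : gq ≠ 0) :
    1 / gt * (gp * (P * T * Y / (gd * gq * kf * mf)) * (X * Z * (gt * gq / gqt)))
      = X * (gp * (P * T * (Y * Z) / (gd * gqt * kf * mf))) := by
  field_simp

theorem NK_RL_fractional_integral (υ : ℕ) (hυ : 0 < υ) (p q : ℝ) (hq : q > -1) (s : ℕ)
    (hs : (s : ℝ) < (p - 1) / 2) (τ : ℝ) (hτ : 0 < τ) (b w y t : ℝ) (hw : b < w) :
    (1 / Real.Gamma τ) *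
        ∫ ξ in b..w, (w - ξ) ^ (τ - 1) * ((ξ - b) ^ q * NK s υ p q t (y * (ξ - b))) =
      (w - b) ^ (q + τ) * NK s υ p (q + τ) t (y * (w - b)) := by
  have hwb : (0:ℝ) < w - b := by linarith
  -- abbreviation for the inner coefficient
  set C : ℕ → ℕ → ℝ := fun k m =>
    Real.Gamma (p - (s:ℝ)) * (poch (-(s : ℝ)) (k + m) * t ^ (s - k) * y ^ (υ * m) /
      (Real.Gamma (p - 2 * (s : ℝ) + (k : ℝ)) * Real.Gamma (q + 1 + (υ : ℝ) * (m : ℝ)) *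
        k.factorial * m.factorial)) with hC
  -- pointwise rewriting of the integrand
  have hpt : ∀ ξ ∈ Set.uIcc b w,
      (w - ξ) ^ (τ - 1) * ((ξ - b) ^ q * NK s υ p q t (y * (ξ - b)))
        = ∑ k ∈ Finset.range (s + 1), ∑ m ∈ Finset.range (s - k + 1),
            C k m * ((w - ξ) ^ (τ - 1) * (ξ - b) ^ ((q + (υ * m : ℕ) + 1) - 1)) := by
    intro ξ hξ
    rw [Set.uIcc_of_le hw.le] at hξ
    have hξb : 0 ≤ ξ - b := by linarith [hξ.1]
    have key : ∀ m : ℕ, (ξ - b) ^ q * (ξ - b) ^ (υ * m : ℕ)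
        = (ξ - b) ^ ((q + (υ * m : ℕ) + 1) - 1) := by
      intro m
      rcases Nat.eq_zero_or_pos (υ * m) with h0 | h0
      · simp [h0]
      · have h1 : (1:ℝ) ≤ ((υ * m : ℕ) : ℝ) := by exact_mod_cast h0
        rw [show (q + ((υ * m : ℕ) : ℝ) + 1) - 1 = q + ((υ * m : ℕ) : ℝ) by ring,
          Real.rpow_add' hξb (by linarith), Real.rpow_natCast]
    rw [NK]
    simp only [Finset.mul_sum]
    refine Finset.sum_congr rfl fun k hk => Finset.sum_congr rfl fun m hm => ?_
    rw [hC, ← key m, mul_pow]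
    ring
  rw [intervalIntegral.integral_congr hpt]
  have hint : ∀ k ∈ Finset.range (s + 1), ∀ m ∈ Finset.range (s - k + 1),
      IntervalIntegrable (fun x =>
        C k m * ((w - x) ^ (τ - 1) * (x - b) ^ ((q + ((υ * m : ℕ) : ℝ) + 1) - 1))) volume b w := by
    intro k hk m hm
    exact (beta_integrable hτ (by have h := Nat.cast_nonneg (α := ℝ) (υ * m); linarith) hw).const_mul _
  have hk1 : ∀ k ∈ Finset.range (s + 1), IntervalIntegrable
      (fun x => ∑ m ∈ Finset.range (s - k + 1),
        C k m * ((w - x) ^ (τ - 1) * (x - b) ^ ((q + ((υ * m : ℕ) : ℝ) + 1) - 1))) volume b w := by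
    intro k hk
    rw [← Finset.sum_fn]
    exact IntervalIntegrable.sum _ (hint k hk)
  rw [intervalIntegral.integral_finset_sum (μ := volume) (a := b) (b := w)
    (f := fun k x => ∑ m ∈ Finset.range (s - k + 1),
      C k m * ((w - x) ^ (τ - 1) * (x - b) ^ ((q + ((υ * m : ℕ) : ℝ) + 1) - 1))) hk1]
  have hswap : ∀ k ∈ Finset.range (s+1),
      (∫ ξ in b..w, ∑ m ∈ Finset.range (s - k + 1),
          C k m * ((w - ξ) ^ (τ - 1) * (ξ - b) ^ ((q + (υ * m : ℕ) + 1) - 1)))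
        = ∑ m ∈ Finset.range (s - k + 1),
            C k m * ((w - b) ^ (τ + (q + (υ * m : ℕ) + 1) - 1) *
              (Real.Gamma τ * Real.Gamma (q + (υ * m : ℕ) + 1) /
                Real.Gamma (τ + (q + (υ * m : ℕ) + 1)))) := by
    intro k hk
    rw [intervalIntegral.integral_finset_sum (μ := volume) (a := b) (b := w)
      (f := fun m x => C k m * ((w - x) ^ (τ - 1) * (x - b) ^ ((q + ((υ * m : ℕ) : ℝ) + 1) - 1)))
      (hint k hk)]
    refine Finset.sum_congr rfl fun m hm => ?_
    rw [intervalIntegral.integral_const_mul, beta_scaled hτ (by have h := Nat.cast_nonneg (α := ℝ) (υ * m); linarith) hw]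
  rw [Finset.sum_congr rfl hswap]
  -- now pure algebra
  rw [NK]
  simp only [Finset.mul_sum]
  refine Finset.sum_congr rfl fun k hk => Finset.sum_congr rfl fun m hm => ?_
  have hτne : Real.Gamma τ ≠ 0 := (Real.Gamma_pos_of_pos hτ).ne'
  have hqm : Real.Gamma (q + 1 + (υ:ℝ) * (m:ℝ)) ≠ 0 := by
    refine (Real.Gamma_pos_of_pos ?_).ne'
    have : (0:ℝ) ≤ (υ:ℝ) * (m:ℝ) := by positivity
    linarith
  have hpow : (w - b) ^ (τ + (q + (υ * m : ℕ) + 1) - 1)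
      = (w - b) ^ (q + τ) * (w - b) ^ (υ * m : ℕ) := by
    rw [show τ + (q + (υ * m : ℕ) + 1) - 1 = (q + τ) + ((υ * m : ℕ) : ℝ) by push_cast; ring,
      Real.rpow_add hwb, Real.rpow_natCast]
  have hGeq : Real.Gamma (q + (υ * m : ℕ) + 1) = Real.Gamma (q + 1 + (υ:ℝ) * (m:ℝ)) := by
    push_cast; ring_nf
  have hGeq2 : Real.Gamma (τ + (q + (υ * m : ℕ) + 1)) = Real.Gamma (q + τ + 1 + (υ:ℝ) * (m:ℝ)) := by
    push_cast; ring_nf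
  rw [hC, hpow, hGeq, hGeq2, mul_pow]
  exact alg_helper _ _ _ _ _ _ _ _ _ _ _ _ hτne hqm
end
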